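/- In the hierarchical setup, assume that g_r is a constant map. Then for all probability distributions p and q on X, W_{d_T}(p,q) = 2^l·‖p−q‖₁ + Σ_{i=l}^{r−1} 2^{i+1}·‖g_i♯p − g_i♯q‖₁. -/
import Mathlib


/-- `p` is a probability distribution on the finite set `X`. -/
def IsProb {X : Type*} [Fintype X] (p : X → ℝ) : Prop :=
  (∀ x, 0 ≤ p x) ∧ ∑ x, p x = 1

/-- `M` is a coupling of `p` and `q`: a probability distribution on `X × X`
whose first marginal is `p` and second marginal is `q`. -/
def IsCoupling {X : Type*} [Fintype X] (p q : X → ℝ) (M : X × X → ℝ) : Prop :=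
  (∀ z, 0 ≤ M z) ∧ (∀ x, ∑ y, M (x, y) = p x) ∧ (∀ y, ∑ x, M (x, y) = q y)

/-- The Wasserstein (transportation) distance between `p` and `q` with respect to the
cost function `c`: the infimum, over all couplings `M` of `p` and `q`, of the expected cost. -/
noncomputable def wassersteinDist {X : Type*} [Fintype X] (c : X → X → ℝ) (p q : X → ℝ) : ℝ :=
  sInf {w : ℝ | ∃ M : X × X → ℝ, IsCoupling p q M ∧ w = ∑ z : X × X, M z * c z.1 z.2}

/-- The `L₁` distance between two distributions on a finite set. -/
noncomputable def l1Dist {X : Type*} [Fintype X] (p q : X → ℝ) : ℝ :=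
  ∑ x, |p x - q x|

/-- The pushforward of the distribution `p` along the map `g`. -/
noncomputable def pushforward {X : Type*} [Fintype X] [DecidableEq X]
    (g : X → X) (p : X → ℝ) : X → ℝ :=
  fun z => ∑ x ∈ Finset.univ.filter (fun x => g x = z), p x

/-- The tree metric associated with the hierarchical family of maps `g i`, levels
`l ≤ i ≤ r`: `d_T x x = 0` and, for `x ≠ y`,
`d_T x y = 2^(l+1) + ∑_{i=l}^{r-1} 2^(i+2) · 1[g i x ≠ g i y]`. -/
noncomputable def treeDist {X : Type*} [DecidableEq X] (l r : ℤ) (g : ℤ → X → X)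
    (x y : X) : ℝ :=
  if x = y then 0
  else (2 : ℝ) ^ (l + 1) +
    ∑ i ∈ Finset.Icc l (r - 1), if g i x ≠ g i y then (2 : ℝ) ^ (i + 2) else 0

section Helpers
variable {X : Type*} [Fintype X] [DecidableEq X]

noncomputable def mismatch (f : X → X) (M : X × X → ℝ) : ℝ :=
  ∑ z : X × X, M z * (if f z.1 = f z.2 then (0:ℝ) else 1)

lemma pushforward_id (p : X → ℝ) : pushforward (fun x => x) p = p := by
  funext z
  simp [pushforward, Finset.filter_eq']

lemma sum_pushforward (f : X → X) (p : X → ℝ) :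
    ∑ z, pushforward f p z = ∑ x, p x := by
  unfold pushforward
  exact Finset.sum_fiberwise_of_maps_to (fun x _ => Finset.mem_univ (f x)) p

end Helpers
section Helpers2
variable {X : Type*} [Fintype X] [DecidableEq X]

lemma pushforward_comp (h f : X → X) (p : X → ℝ) :
    pushforward (h ∘ f) p = pushforward h (pushforward f p) := by
  funext w
  unfold pushforward
  simp only [Finset.sum_filter]
  have key : ∀ a : X, (if h a = w then (∑ x, if f x = a then p x else 0) else 0)
      = ∑ x, if f x = a then (if h (f x) = w then p x else 0) else 0 := by
    intro a
    by_cases hh : h a = w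
    · rw [if_pos hh]
      refine Finset.sum_congr rfl fun x _ => ?_
      by_cases hfx : f x = a
      · rw [if_pos hfx, if_pos hfx, hfx, if_pos hh]
      · rw [if_neg hfx, if_neg hfx]
    · rw [if_neg hh]
      symm
      refine Finset.sum_eq_zero fun x _ => ?_
      by_cases hfx : f x = a
      · rw [if_pos hfx, hfx, if_neg hh]
      · rw [if_neg hfx]
  rw [Finset.sum_congr rfl fun a _ => key a, Finset.sum_comm]
  refine Finset.sum_congr rfl fun x _ => ?_
  rw [Finset.sum_ite_eq]
  simp [Function.comp]

lemma pushforward_sub (f : X → X) (p q : X → ℝ) (w : X) :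
    pushforward f (fun x => p x - q x) w = pushforward f p w - pushforward f q w := by
  simp [pushforward, Finset.sum_sub_distrib]

lemma pushforward_div (f : X → X) (p : X → ℝ) (s : ℝ) (w : X) :
    pushforward f (fun x => p x / s) w = pushforward f p w / s := by
  simp [pushforward, Finset.sum_div]

lemma pushforward_nonneg (f : X → X) (p : X → ℝ) (hp : ∀ x, 0 ≤ p x) (w : X) :
    0 ≤ pushforward f p w :=
  Finset.sum_nonneg fun x _ => hp x

lemma le_pushforward (f : X → X) (p : X → ℝ) (hp : ∀ x, 0 ≤ p x) (x : X) :
    p x ≤ pushforward f p (f x) := by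
  refine Finset.single_le_sum (fun y _ => hp y) ?_
  simp

lemma sum_indicator_pair (a b : X) :
    ∑ w : X, |(if a = w then (1:ℝ) else 0) - (if b = w then (1:ℝ) else 0)|
      = if a = b then 0 else 2 := by
  by_cases hab : a = b
  · subst hab; simp
  · rw [if_neg hab]
    have : ∀ w : X, |(if a = w then (1:ℝ) else 0) - (if b = w then (1:ℝ) else 0)|
        = (if a = w then (1:ℝ) else 0) + (if b = w then (1:ℝ) else 0) := by
      intro w
      by_cases h1 : a = w <;> by_cases h2 : b = w <;>
        first
        | (exfalso; exact hab (h1.trans h2.symm))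
        | simp [h1, h2]
    rw [Finset.sum_congr rfl fun w _ => this w, Finset.sum_add_distrib]
    simp only [Finset.sum_ite_eq, Finset.mem_univ, if_pos]
    norm_num

/-- marginal representation of pushforward through a coupling -/
lemma pushforward_eq_sum_coupling_fst (f : X → X) (p q : X → ℝ) (M : X × X → ℝ)
    (hM : IsCoupling p q M) (w : X) :
    pushforward f p w = ∑ z : X × X, M z * (if f z.1 = w then 1 else 0) := by
  rw [Fintype.sum_prod_type]
  unfold pushforward
  rw [Finset.sum_filter]
  refine Finset.sum_congr rfl fun x _ => ?_
  rw [← hM.2.1 x]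
  by_cases h : f x = w <;> simp [h, Finset.sum_mul]

lemma pushforward_eq_sum_coupling_snd (f : X → X) (p q : X → ℝ) (M : X × X → ℝ)
    (hM : IsCoupling p q M) (w : X) :
    pushforward f q w = ∑ z : X × X, M z * (if f z.2 = w then 1 else 0) := by
  rw [Fintype.sum_prod_type_right]
  unfold pushforward
  rw [Finset.sum_filter]
  refine Finset.sum_congr rfl fun y _ => ?_
  rw [← hM.2.2 y]
  by_cases h : f y = w <;> simp [h, Finset.sum_mul]

/-- Lower bound: the L1 distance of pushforwards is at most twice the mismatch mass. -/
lemma l1_le_two_mismatch (f : X → X) (p q : X → ℝ) (M : X × X → ℝ)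
    (hM : IsCoupling p q M) :
    l1Dist (pushforward f p) (pushforward f q) ≤ 2 * mismatch f M := by
  have step1 : ∀ w, |pushforward f p w - pushforward f q w|
      ≤ ∑ z : X × X, M z * |(if f z.1 = w then (1:ℝ) else 0) - (if f z.2 = w then 1 else 0)| := by
    intro w
    rw [pushforward_eq_sum_coupling_fst f p q M hM w,
        pushforward_eq_sum_coupling_snd f p q M hM w, ← Finset.sum_sub_distrib]
    refine (Finset.abs_sum_le_sum_abs _ _).trans (Finset.sum_le_sum fun z _ => ?_)
    rw [← mul_sub, abs_mul, abs_of_nonneg (hM.1 z)]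
  calc l1Dist (pushforward f p) (pushforward f q)
      ≤ ∑ w, ∑ z : X × X, M z * |(if f z.1 = w then (1:ℝ) else 0) - (if f z.2 = w then 1 else 0)| :=
        Finset.sum_le_sum fun w _ => step1 w
    _ = ∑ z : X × X, M z * (if f z.1 = f z.2 then 0 else 2) := by
        rw [Finset.sum_comm]
        refine Finset.sum_congr rfl fun z _ => ?_
        rw [← Finset.mul_sum, sum_indicator_pair]
    _ = 2 * mismatch f M := by
        rw [mismatch, Finset.mul_sum]
        refine Finset.sum_congr rfl fun z _ => ?_
        by_cases h : f z.1 = f z.2 <;> simp [h] <;> ring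

end Helpers2
section Construction
variable {X : Type*} [Fintype X] [DecidableEq X]

/-- The fiberwise-product matching part of the coupling. -/
noncomputable def matchC (f0 : X → X) (p q : X → ℝ) : X × X → ℝ :=
  fun w => if f0 w.1 = f0 w.2 then
    (min (pushforward f0 p (f0 w.1)) (pushforward f0 q (f0 w.1)) /
      (pushforward f0 p (f0 w.1) * pushforward f0 q (f0 w.1))) * (p w.1 * q w.2) else 0

/-- The residual (unmatched) part of `p`. -/
noncomputable def resid (f0 : X → X) (p q : X → ℝ) : X → ℝ :=
  fun x => p x - min (pushforward f0 p (f0 x)) (pushforward f0 q (f0 x)) * p x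
      / pushforward f0 p (f0 x)

lemma matchC_nonneg (f0 : X → X) (p q : X → ℝ) (hp : ∀ x, 0 ≤ p x) (hq : ∀ y, 0 ≤ q y)
    (w : X × X) : 0 ≤ matchC f0 p q w := by
  unfold matchC
  split
  · exact mul_nonneg (div_nonneg (le_min (pushforward_nonneg _ _ hp _)
      (pushforward_nonneg _ _ hq _)) (mul_nonneg (pushforward_nonneg _ _ hp _)
      (pushforward_nonneg _ _ hq _))) (mul_nonneg (hp _) (hq _))
  · exact le_refl 0

lemma matchC_marg1 (f0 : X → X) (p q : X → ℝ) (hp : ∀ x, 0 ≤ p x) (hq : ∀ y, 0 ≤ q y)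
    (x : X) :
    ∑ y, matchC f0 p q (x, y)
      = min (pushforward f0 p (f0 x)) (pushforward f0 q (f0 x)) * p x
          / pushforward f0 p (f0 x) := by
  have hrw : ∀ y, matchC f0 p q (x, y)
      = (min (pushforward f0 p (f0 x)) (pushforward f0 q (f0 x)) /
          (pushforward f0 p (f0 x) * pushforward f0 q (f0 x))) * p x
        * (if f0 y = f0 x then q y else 0) := by
    intro y
    unfold matchC
    by_cases h : f0 x = f0 y
    · rw [if_pos h, if_pos h.symm]; ring
    · rw [if_neg h, if_neg fun hh => h hh.symm, mul_zero]
  rw [Finset.sum_congr rfl fun y _ => hrw y, ← Finset.mul_sum]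
  have hsum : (∑ y, if f0 y = f0 x then q y else 0) = pushforward f0 q (f0 x) := by
    rw [pushforward, Finset.sum_filter]
  rw [hsum]
  by_cases hQ0 : pushforward f0 q (f0 x) = 0
  · rw [hQ0]
    simp [min_eq_right (pushforward_nonneg f0 p hp (f0 x))]
  by_cases hP0 : pushforward f0 p (f0 x) = 0
  · rw [hP0]
    simp [min_eq_left (pushforward_nonneg f0 q hq (f0 x))]
  · field_simp

lemma matchC_marg2 (f0 : X → X) (p q : X → ℝ) (hp : ∀ x, 0 ≤ p x) (hq : ∀ y, 0 ≤ q y)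
    (y : X) :
    ∑ x, matchC f0 p q (x, y)
      = min (pushforward f0 p (f0 y)) (pushforward f0 q (f0 y)) * q y
          / pushforward f0 q (f0 y) := by
  have hrw : ∀ x, matchC f0 p q (x, y)
      = (min (pushforward f0 p (f0 y)) (pushforward f0 q (f0 y)) /
          (pushforward f0 p (f0 y) * pushforward f0 q (f0 y))) * q y
        * (if f0 x = f0 y then p x else 0) := by
    intro x
    unfold matchC
    by_cases h : f0 x = f0 y
    · rw [if_pos h, if_pos h, h]; ring
    · rw [if_neg h, if_neg h, mul_zero]
  rw [Finset.sum_congr rfl fun x _ => hrw x, ← Finset.mul_sum]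
  have hsum : (∑ x, if f0 x = f0 y then p x else 0) = pushforward f0 p (f0 y) := by
    rw [pushforward, Finset.sum_filter]
  rw [hsum]
  by_cases hP0 : pushforward f0 p (f0 y) = 0
  · rw [hP0]
    simp [min_eq_left (pushforward_nonneg f0 q hq (f0 y))]
  by_cases hQ0 : pushforward f0 q (f0 y) = 0
  · rw [hQ0]
    simp [min_eq_right (pushforward_nonneg f0 p hp (f0 y))]
  · field_simp

lemma resid_nonneg (f0 : X → X) (p q : X → ℝ) (hp : ∀ x, 0 ≤ p x) (hq : ∀ y, 0 ≤ q y)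
    (x : X) : 0 ≤ resid f0 p q x := by
  unfold resid
  rw [sub_nonneg]
  by_cases hP0 : pushforward f0 p (f0 x) = 0
  · have hpx : p x = 0 :=
      le_antisymm (hP0 ▸ le_pushforward f0 p hp x) (hp x)
    rw [hpx, mul_zero, zero_div]
  · have hPpos : 0 < pushforward f0 p (f0 x) :=
      lt_of_le_of_ne (pushforward_nonneg f0 p hp _) (Ne.symm hP0)
    rw [div_le_iff₀ hPpos]
    exact mul_le_mul_of_nonneg_right (min_le_left _ _) (hp x) |>.trans
      (le_of_eq (mul_comm _ _))

lemma pushforward_resid (f0 : X → X) (p q : X → ℝ) (hq : ∀ y, 0 ≤ q y) (w : X) :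
    pushforward f0 (resid f0 p q) w
      = pushforward f0 p w - min (pushforward f0 p w) (pushforward f0 q w) := by
  have hrw : ∀ x ∈ Finset.univ.filter (fun x => f0 x = w), resid f0 p q x
      = p x - (min (pushforward f0 p w) (pushforward f0 q w) / pushforward f0 p w) * p x := by
    intro x hx
    simp only [Finset.mem_filter] at hx
    unfold resid
    rw [hx.2]
    ring
  rw [pushforward, Finset.sum_congr rfl hrw, Finset.sum_sub_distrib, ← Finset.mul_sum]
  have h1 : (∑ x ∈ Finset.univ.filter (fun x => f0 x = w), p x) = pushforward f0 p w := rfl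
  rw [h1]
  by_cases hP0 : pushforward f0 p w = 0
  · have h2 : min (pushforward f0 p w) (pushforward f0 q w) = 0 := by
      rw [hP0]
      exact min_eq_left (pushforward_nonneg f0 q hq w)
    rw [hP0] at h2 ⊢
    rw [h2]
    simp
  · rw [div_mul_cancel₀ _ hP0]

end Construction
section Key
variable {X : Type*} [Fintype X] [DecidableEq X]

lemma abs_sub_eq_add_sub_two_min (a b : ℝ) : |a - b| = a + b - 2 * min a b := by
  rcases le_total a b with h | h
  · rw [abs_of_nonpos (sub_nonpos.2 h), min_eq_left h]; ring
  · rw [abs_of_nonneg (sub_nonneg.2 h), min_eq_right h]; ring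

lemma chain_factor (N : ℕ) (f : ℕ → X → X) (hchain : ∀ i < N, ∃ h : X → X, f (i+1) = h ∘ f i) :
    ∀ j ≤ N, ∃ H : X → X, f j = H ∘ f 0 := by
  intro j
  induction j with
  | zero => exact fun _ => ⟨id, rfl⟩
  | succ j ihj =>
    intro hj
    obtain ⟨H, hH⟩ := ihj (Nat.le_of_succ_le hj)
    obtain ⟨h, hh⟩ := hchain j (Nat.lt_of_succ_le hj)
    exact ⟨h ∘ H, by rw [hh, hH]; rfl⟩

lemma key_coupling : ∀ (n : ℕ) (f : ℕ → X → X),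
    (∀ i < n, ∃ h : X → X, f (i+1) = h ∘ f i) → (∃ z, ∀ x, f n x = z) →
    ∀ p q : X → ℝ, IsProb p → IsProb q →
    ∃ M : X × X → ℝ, IsCoupling p q M ∧
      ∀ i ≤ n, 2 * mismatch (f i) M
        = l1Dist (pushforward (f i) p) (pushforward (f i) q) := by
  intro n
  induction n with
  | zero =>
    intro f _ hconst p q hp hq
    obtain ⟨z, hz⟩ := hconst
    have hpush : ∀ u : X → ℝ, (∑ x, u x = 1) →
        ∀ w, pushforward (f 0) u w = if z = w then 1 else 0 := by
      intro u hu w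
      by_cases hzw : z = w <;> simp [pushforward, hz, hzw, hu]
    refine ⟨fun w => p w.1 * q w.2, ⟨?_, ?_, ?_⟩, ?_⟩
    · exact fun w => mul_nonneg (hp.1 _) (hq.1 _)
    · intro x; dsimp only; rw [← Finset.mul_sum, hq.2, mul_one]
    · intro y; dsimp only; rw [← Finset.sum_mul, hp.2, one_mul]
    · intro i hi
      rw [Nat.le_zero] at hi
      subst hi
      have h1 : mismatch (f 0) (fun w => p w.1 * q w.2) = 0 := by
        refine Finset.sum_eq_zero fun w _ => ?_
        rw [hz w.1, hz w.2, if_pos rfl, mul_zero]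
      have h2 : l1Dist (pushforward (f 0) p) (pushforward (f 0) q) = 0 := by
        refine Finset.sum_eq_zero fun w _ => ?_
        rw [hpush p hp.2 w, hpush q hq.2 w, sub_self, abs_zero]
      rw [h1, h2, mul_zero]
  | succ n ih =>
    intro f hchain hconst p q hp hq
    obtain ⟨z, hz⟩ := hconst
    have hfactor := chain_factor (n+1) f hchain
    -- abbreviations (as plain terms)
    have hPn : ∀ w, 0 ≤ pushforward (f 0) p w := pushforward_nonneg _ _ hp.1
    have hQn : ∀ w, 0 ≤ pushforward (f 0) q w := pushforward_nonneg _ _ hq.1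
    have hptn : ∀ x, 0 ≤ resid (f 0) p q x := resid_nonneg _ _ _ hp.1 hq.1
    have hqtn : ∀ y, 0 ≤ resid (f 0) q p y := resid_nonneg _ _ _ hq.1 hp.1
    have hpush_pt : ∀ w, pushforward (f 0) (resid (f 0) p q) w
        = pushforward (f 0) p w - min (pushforward (f 0) p w) (pushforward (f 0) q w) :=
      pushforward_resid _ _ _ hq.1
    have hpush_qt : ∀ w, pushforward (f 0) (resid (f 0) q p) w
        = pushforward (f 0) q w - min (pushforward (f 0) p w) (pushforward (f 0) q w) := by
      intro w
      rw [pushforward_resid _ _ _ hp.1 w, min_comm]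
    -- the total residual mass
    set s : ℝ := ∑ w, (pushforward (f 0) p w - min (pushforward (f 0) p w) (pushforward (f 0) q w)) with hs
    have hs_p : ∑ x, resid (f 0) p q x = s := by
      rw [← sum_pushforward (f 0)]
      exact Finset.sum_congr rfl fun w _ => hpush_pt w
    have hs_q : ∑ y, resid (f 0) q p y = s := by
      rw [← sum_pushforward (f 0)]
      rw [Finset.sum_congr rfl fun w _ => hpush_qt w]
      rw [hs, Finset.sum_sub_distrib, Finset.sum_sub_distrib,
        sum_pushforward, sum_pushforward, hp.2, hq.2]
    have hsn : 0 ≤ s := hs_p ▸ Finset.sum_nonneg fun x _ => hptn x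
    have hl1PQ : l1Dist (pushforward (f 0) p) (pushforward (f 0) q) = 2 * s := by
      unfold l1Dist
      rw [Finset.sum_congr rfl fun w _ =>
        abs_sub_eq_add_sub_two_min (pushforward (f 0) p w) (pushforward (f 0) q w)]
      rw [hs, Finset.sum_sub_distrib, Finset.sum_sub_distrib, Finset.sum_add_distrib,
        ← Finset.mul_sum, sum_pushforward, sum_pushforward, hp.2, hq.2]
      ring
    -- matched part has zero mismatch at every level
    have hMm_mis : ∀ j ≤ n+1, mismatch (f j) (matchC (f 0) p q) = 0 := by
      intro j hj
      obtain ⟨H, hH⟩ := hfactor j hj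
      refine Finset.sum_eq_zero fun w _ => ?_
      by_cases h : f 0 w.1 = f 0 w.2
      · have : f j w.1 = f j w.2 := by rw [hH]; simp only [Function.comp_apply, h]
        rw [if_pos this, mul_zero]
      · have : matchC (f 0) p q w = 0 := by unfold matchC; rw [if_neg h]
        rw [this, zero_mul]
    -- the marginals of the matched part, rewritten via residuals
    have hmarg1 : ∀ x, ∑ y, matchC (f 0) p q (x, y) = p x - resid (f 0) p q x := by
      intro x
      rw [matchC_marg1 _ _ _ hp.1 hq.1 x]
      unfold resid
      ring
    have hmarg2 : ∀ y, ∑ x, matchC (f 0) p q (x, y) = q y - resid (f 0) q p y := by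
      intro y
      rw [matchC_marg2 _ _ _ hp.1 hq.1 y]
      unfold resid
      rw [min_comm]
      ring
    by_cases hs0 : s = 0
    · -- no residual: the matched part is itself a coupling
      have hpt0 : ∀ x, resid (f 0) p q x = 0 := by
        have h0 : ∑ x, resid (f 0) p q x = 0 := by rw [hs_p, hs0]
        intro x
        exact (Finset.sum_eq_zero_iff_of_nonneg fun x _ => hptn x).mp h0 x (Finset.mem_univ x)
      have hqt0 : ∀ y, resid (f 0) q p y = 0 := by
        have h0 : ∑ y, resid (f 0) q p y = 0 := by rw [hs_q, hs0]
        intro y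
        exact (Finset.sum_eq_zero_iff_of_nonneg fun y _ => hqtn y).mp h0 y (Finset.mem_univ y)
      have hPQ : pushforward (f 0) p = pushforward (f 0) q := by
        have h0 : ∑ w, |pushforward (f 0) p w - pushforward (f 0) q w| = 0 := by
          have := hl1PQ
          unfold l1Dist at this
          rw [this, hs0, mul_zero]
        funext w
        have := (Finset.sum_eq_zero_iff_of_nonneg fun w _ => abs_nonneg _).mp h0 w
          (Finset.mem_univ w)
        exact sub_eq_zero.mp (abs_eq_zero.mp this)
      refine ⟨matchC (f 0) p q, ⟨matchC_nonneg _ _ _ hp.1 hq.1, ?_, ?_⟩, ?_⟩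
      · intro x; rw [hmarg1 x, hpt0 x, sub_zero]
      · intro y; rw [hmarg2 y, hqt0 y, sub_zero]
      · intro i hi
        rw [hMm_mis i hi, mul_zero]
        obtain ⟨H, hH⟩ := hfactor i hi
        have heq : pushforward (f i) p = pushforward (f i) q := by
          rw [hH, pushforward_comp, pushforward_comp, hPQ]
        rw [heq]
        exact (Finset.sum_eq_zero fun w _ => by rw [sub_self, abs_zero]).symm
    · -- positive residual: couple the residuals using the inductive hypothesis
      have hspos : 0 < s := lt_of_le_of_ne hsn (Ne.symm hs0)
      have hp' : IsProb (fun x => resid (f 0) p q x / s) :=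
        ⟨fun x => div_nonneg (hptn x) hsn, by rw [← Finset.sum_div, hs_p, div_self hs0]⟩
      have hq' : IsProb (fun y => resid (f 0) q p y / s) :=
        ⟨fun y => div_nonneg (hqtn y) hsn, by rw [← Finset.sum_div, hs_q, div_self hs0]⟩
      obtain ⟨M'', hM''c, hM''m⟩ := ih (fun i => f (i+1))
        (fun i hi => hchain (i+1) (Nat.succ_lt_succ hi)) ⟨z, hz⟩
        (fun x => resid (f 0) p q x / s) (fun y => resid (f 0) q p y / s) hp' hq'
      refine ⟨fun w => matchC (f 0) p q w + s * M'' w, ⟨?_, ?_, ?_⟩, ?_⟩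
      · exact fun w => add_nonneg (matchC_nonneg _ _ _ hp.1 hq.1 w)
          (mul_nonneg hsn (hM''c.1 w))
      · intro x
        rw [Finset.sum_add_distrib, hmarg1 x, ← Finset.mul_sum, hM''c.2.1 x,
          mul_div_cancel₀ _ hs0]
        ring
      · intro y
        rw [Finset.sum_add_distrib, hmarg2 y, ← Finset.mul_sum, hM''c.2.2 y,
          mul_div_cancel₀ _ hs0]
        ring
      · intro i hi
        have hsplit : ∀ fM : X → X, mismatch fM (fun w => matchC (f 0) p q w + s * M'' w)
            = mismatch fM (matchC (f 0) p q) + s * mismatch fM M'' := by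
          intro fM
          unfold mismatch
          rw [Finset.mul_sum, ← Finset.sum_add_distrib]
          exact Finset.sum_congr rfl fun w _ => by ring
        cases i with
        | zero =>
          rw [hsplit, hMm_mis 0 (Nat.zero_le _), zero_add, hl1PQ]
          have hmis1 : mismatch (f 0) M'' = 1 := by
            have hterm : ∀ w : X × X,
                M'' w * (if f 0 w.1 = f 0 w.2 then (0:ℝ) else 1) = M'' w := by
              intro w
              rcases eq_or_lt_of_le (hM''c.1 w) with h0 | hpos
              · rw [← h0, zero_mul]
              · have hne : f 0 w.1 ≠ f 0 w.2 := by
                  intro heq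
                  have h1 : 0 < resid (f 0) p q w.1 / s := lt_of_lt_of_le hpos
                    ((Finset.single_le_sum (fun y _ => hM''c.1 (w.1, y))
                      (Finset.mem_univ w.2)).trans_eq (hM''c.2.1 w.1))
                  have h2 : 0 < resid (f 0) q p w.2 / s := lt_of_lt_of_le hpos
                    ((Finset.single_le_sum (fun x _ => hM''c.1 (x, w.2))
                      (Finset.mem_univ w.1)).trans_eq (hM''c.2.2 w.2))
                  have hpt1 : 0 < resid (f 0) p q w.1 := by
                    have := mul_pos h1 hspos
                    rwa [div_mul_cancel₀ _ hs0] at this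
                  have hqt2 : 0 < resid (f 0) q p w.2 := by
                    have := mul_pos h2 hspos
                    rwa [div_mul_cancel₀ _ hs0] at this
                  have hPt : min (pushforward (f 0) p (f 0 w.1)) (pushforward (f 0) q (f 0 w.1))
                      < pushforward (f 0) p (f 0 w.1) := by
                    have := lt_of_lt_of_le hpt1 (le_pushforward (f 0) _ hptn w.1)
                    rw [hpush_pt] at this
                    linarith
                  have hQt : min (pushforward (f 0) p (f 0 w.2)) (pushforward (f 0) q (f 0 w.2))
                      < pushforward (f 0) q (f 0 w.2) := by
                    have := lt_of_lt_of_le hqt2 (le_pushforward (f 0) _ hqtn w.2)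
                    rw [hpush_qt] at this
                    linarith
                  have h1' : pushforward (f 0) q (f 0 w.1) < pushforward (f 0) p (f 0 w.1) := by
                    rcases min_lt_iff.mp hPt with h | h
                    · exact absurd h (lt_irrefl _)
                    · exact h
                  have h2' : pushforward (f 0) p (f 0 w.2) < pushforward (f 0) q (f 0 w.2) := by
                    rcases min_lt_iff.mp hQt with h | h
                    · exact h
                    · exact absurd h (lt_irrefl _)
                  rw [heq] at h1'
                  linarith
                rw [if_neg hne, mul_one]
            unfold mismatch
            rw [Finset.sum_congr rfl fun w _ => hterm w, Fintype.sum_prod_type]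
            rw [Finset.sum_congr rfl fun x (_ : x ∈ Finset.univ) => hM''c.2.1 x]
            exact hp'.2
          rw [hmis1, mul_one]
        | succ j =>
          have hj : j ≤ n := Nat.succ_le_succ_iff.mp hi
          rw [hsplit, hMm_mis (j+1) hi, zero_add]
          have hIH := hM''m j hj
          obtain ⟨H, hH⟩ := hfactor (j+1) hi
          have hkey : ∀ w, pushforward (f (j+1)) p w - pushforward (f (j+1)) q w
              = pushforward (f (j+1)) (resid (f 0) p q) w
                - pushforward (f (j+1)) (resid (f 0) q p) w := by
            intro w
            have hpp : pushforward (f 0) (fun x => p x - resid (f 0) p q x)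
                = pushforward (f 0) (fun y => q y - resid (f 0) q p y) := by
              funext w'
              rw [pushforward_sub, pushforward_sub, hpush_pt, hpush_qt]
              ring
            have hcomp : pushforward (f (j+1)) (fun x => p x - resid (f 0) p q x)
                = pushforward (f (j+1)) (fun y => q y - resid (f 0) q p y) := by
              rw [hH, pushforward_comp, pushforward_comp, hpp]
            have := congrFun hcomp w
            rw [pushforward_sub, pushforward_sub] at this
            linarith
          have hdiv1 : ∀ w, pushforward (f (j+1)) (fun x => resid (f 0) p q x / s) w
              = pushforward (f (j+1)) (resid (f 0) p q) w / s := pushforward_div _ _ _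
          have hdiv2 : ∀ w, pushforward (f (j+1)) (fun y => resid (f 0) q p y / s) w
              = pushforward (f (j+1)) (resid (f 0) q p) w / s := pushforward_div _ _ _
          calc 2 * (s * mismatch (f (j+1)) M'')
              = s * (2 * mismatch (f (j+1)) M'') := by ring
            _ = s * l1Dist (pushforward (f (j+1)) (fun x => resid (f 0) p q x / s))
                  (pushforward (f (j+1)) (fun y => resid (f 0) q p y / s)) := by rw [hIH]
            _ = l1Dist (pushforward (f (j+1)) p) (pushforward (f (j+1)) q) := by
                unfold l1Dist
                rw [Finset.mul_sum]
                refine Finset.sum_congr rfl fun w _ => ?_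
                rw [hdiv1 w, hdiv2 w, div_sub_div_same, abs_div, abs_of_pos hspos,
                  mul_comm, div_mul_cancel₀ _ hs0, ← hkey w]
  end Key
section Cost
variable {X : Type*} [Fintype X] [DecidableEq X]

lemma cost_decomp (l r : ℤ) (g : ℤ → X → X) (M : X × X → ℝ) :
    ∑ z : X × X, M z * treeDist l r g z.1 z.2
      = (2:ℝ)^(l+1) * mismatch (fun x : X => x) M
        + ∑ i ∈ Finset.Icc l (r-1), (2:ℝ)^(i+2) * mismatch (g i) M := by
  have hpt : ∀ x y : X, M (x, y) * treeDist l r g x y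
      = (2:ℝ)^(l+1) * (M (x, y) * (if x = y then (0:ℝ) else 1))
        + ∑ i ∈ Finset.Icc l (r-1),
            (2:ℝ)^(i+2) * (M (x, y) * (if g i x = g i y then (0:ℝ) else 1)) := by
    intro x y
    unfold treeDist
    by_cases hxy : x = y
    · subst hxy
      simp
    · rw [if_neg hxy, if_neg hxy, mul_add, Finset.mul_sum]
      congr 1
      · ring
      · refine Finset.sum_congr rfl fun i _ => ?_
        by_cases h : g i x = g i y
        · simp [h]
        · rw [if_neg h, if_pos h, mul_one]
          ring
  have : ∀ z : X × X, M z * treeDist l r g z.1 z.2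
      = (2:ℝ)^(l+1) * (M z * (if z.1 = z.2 then (0:ℝ) else 1))
        + ∑ i ∈ Finset.Icc l (r-1),
            (2:ℝ)^(i+2) * (M z * (if g i z.1 = g i z.2 then (0:ℝ) else 1)) :=
    fun z => hpt z.1 z.2
  rw [Finset.sum_congr rfl fun z _ => this z, Finset.sum_add_distrib, ← Finset.mul_sum,
    Finset.sum_comm]
  unfold mismatch
  congr 1
  exact Finset.sum_congr rfl fun i _ => (Finset.mul_sum _ _ _).symm

end Cost

/-- Hierarchical setup: if `g_r` is constant, then the Wasserstein distance with respect to
the tree metric decomposes as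
`W_{d_T}(p,q) = 2^l·‖p−q‖₁ + ∑_{i=l}^{r−1} 2^(i+1)·‖g_i♯p − g_i♯q‖₁`. -/
theorem wasserstein_treeDist_eq_sum_l1
    {X : Type*} [MetricSpace X] [Fintype X] [Nonempty X] [DecidableEq X]
    (l r : ℤ) (hlr : l ≤ r) (π g : ℤ → X → X)
    (hgl : g l = π l)
    (hgs : ∀ i : ℤ, l ≤ i → i < r → g (i + 1) = π (i + 1) ∘ g i)
    (hconst : ∃ z : X, ∀ x : X, g r x = z)
    (p q : X → ℝ) (hp : IsProb p) (hq : IsProb q) :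
    wassersteinDist (treeDist l r g) p q =
      (2 : ℝ) ^ l * l1Dist p q +
        ∑ i ∈ Finset.Icc l (r - 1),
          (2 : ℝ) ^ (i + 1) * l1Dist (pushforward (g i) p) (pushforward (g i) q) := by
  classical
  obtain ⟨n, hcast⟩ : ∃ n : ℕ, (n : ℤ) = r - l + 1 := ⟨(r - l + 1).toNat, by omega⟩
  set F : ℕ → X → X := fun j => if j = 0 then (fun x => x) else g (l + j - 1) with hF
  have hF0 : F 0 = fun x : X => x := by simp [hF]
  have hFj : ∀ j : ℕ, j ≠ 0 → F j = g (l + j - 1) := by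
    intro j hj
    simp [hF, hj]
  have hchain : ∀ i < n, ∃ h : X → X, F (i+1) = h ∘ F i := by
    intro i hi
    cases i with
    | zero => exact ⟨F 1, by rw [hF0]; rfl⟩
    | succ i =>
      refine ⟨π (l + i + 1), ?_⟩
      have h1 : F (i+1+1) = g (l + i + 1) := by
        rw [hFj (i+1+1) (by omega)]
        congr 1
        push_cast
        ring
      have h2 : F (i+1) = g (l + i) := by
        rw [hFj (i+1) (by omega)]
        congr 1
        push_cast
        ring
      rw [h1, h2]
      have := hgs (l + i) (by omega) (by omega)
      exact this
  have hconstF : ∃ z, ∀ x, F n x = z := by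
    obtain ⟨z, hz⟩ := hconst
    refine ⟨z, fun x => ?_⟩
    have hFn : F n = g r := by
      rw [hFj n (by omega), show l + (n:ℤ) - 1 = r by omega]
    rw [hFn]
    exact hz x
  obtain ⟨M, hMc, hMm⟩ := key_coupling n F hchain hconstF p q hp hq
  have hid : 2 * mismatch (fun x : X => x) M = l1Dist p q := by
    have h := hMm 0 (Nat.zero_le n)
    rw [hF0, pushforward_id, pushforward_id] at h
    exact h
  have hlevel : ∀ i ∈ Finset.Icc l (r-1),
      2 * mismatch (g i) M = l1Dist (pushforward (g i) p) (pushforward (g i) q) := by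
    intro i hi
    rw [Finset.mem_Icc] at hi
    have hjn : (i - l + 1).toNat ≤ n := by omega
    have hFi : F ((i - l + 1).toNat) = g i := by
      rw [hFj _ (by omega), show l + ((i - l + 1).toNat : ℤ) - 1 = i by omega]
    have h := hMm _ hjn
    rw [hFi] at h
    exact h
  have h2l : (2:ℝ)^(l+1) = 2^l * 2 := by rw [zpow_add_one₀ two_ne_zero]
  have h2i : ∀ i : ℤ, (2:ℝ)^(i+2) = 2^(i+1) * 2 := by
    intro i
    rw [show i+2 = (i+1)+1 by ring, zpow_add_one₀ two_ne_zero]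
  have hcost : ∑ z : X × X, M z * treeDist l r g z.1 z.2
      = (2:ℝ)^l * l1Dist p q + ∑ i ∈ Finset.Icc l (r-1),
          (2:ℝ)^(i+1) * l1Dist (pushforward (g i) p) (pushforward (g i) q) := by
    rw [cost_decomp]
    congr 1
    · rw [← hid, h2l]
      ring
    · refine Finset.sum_congr rfl fun i hi => ?_
      rw [← hlevel i hi, h2i i]
      ring
  have hlb : ∀ M' : X × X → ℝ, IsCoupling p q M' →
      (2:ℝ)^l * l1Dist p q + ∑ i ∈ Finset.Icc l (r-1),
          (2:ℝ)^(i+1) * l1Dist (pushforward (g i) p) (pushforward (g i) q)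
        ≤ ∑ z : X × X, M' z * treeDist l r g z.1 z.2 := by
    intro M' hM'
    rw [cost_decomp]
    apply add_le_add
    · have h := l1_le_two_mismatch (fun x : X => x) p q M' hM'
      rw [pushforward_id, pushforward_id] at h
      calc (2:ℝ)^l * l1Dist p q ≤ (2:ℝ)^l * (2 * mismatch (fun x : X => x) M') :=
            mul_le_mul_of_nonneg_left h (le_of_lt (zpow_pos two_pos l))
        _ = (2:ℝ)^(l+1) * mismatch (fun x : X => x) M' := by rw [h2l]; ring
    · refine Finset.sum_le_sum fun i _ => ?_
      have h := l1_le_two_mismatch (g i) p q M' hM'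
      calc (2:ℝ)^(i+1) * l1Dist (pushforward (g i) p) (pushforward (g i) q)
          ≤ (2:ℝ)^(i+1) * (2 * mismatch (g i) M') :=
            mul_le_mul_of_nonneg_left h (le_of_lt (zpow_pos two_pos (i+1)))
        _ = (2:ℝ)^(i+2) * mismatch (g i) M' := by rw [h2i i]; ring
  apply le_antisymm
  · exact csInf_le ⟨_, fun w hw => by
        obtain ⟨M', hM', rfl⟩ := hw
        exact hlb M' hM'⟩
      ⟨M, hMc, hcost.symm⟩
  · exact le_csInf ⟨_, ⟨M, hMc, hcost.symm⟩⟩ fun w hw => by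
      obtain ⟨M', hM', rfl⟩ := hw
      exact hlb M' hM'
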